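/- arXiv:math/0503440 — 5 statements merged into one kernel-verified Lean document; each statement's English description precedes it below -/
import Mathlib

section
/- For any real number θ, any positive integers k and N, there exist integers a₁,…,a_k and q₁,…,q_k with 1 ≤ qᵢ ≤ N for all i, and a constant C depending only on k, such that |a₁/q₁ + ⋯ + a_k/q_k − θ| ≤ C·N^{−k}. -/
open Finset

private def Lf (N : ℕ) : ℕ → ℕ
  | 0 => 1
  | j + 1 => Nat.lcm (Lf N j) (N - j)

private lemma Lf_pos (N : ℕ) : ∀ j, j ≤ N → 0 < Lf N j
  | 0, _ => Nat.one_pos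
  | j + 1, h => Nat.lcm_pos (Lf_pos N j (by omega)) (by omega)

private lemma gcd_Lf_dvd (N : ℕ) (a : ℕ) :
    ∀ j, Nat.gcd a (Lf N j) ∣ ∏ i ∈ range j, Nat.gcd a (N - i)
  | 0 => by simp [Lf]
  | j + 1 => by
    rw [prod_range_succ]
    have h1 : Nat.gcd a (Lf N (j+1)) ∣ Nat.gcd a (Lf N j * (N - j)) := by
      apply Nat.dvd_gcd (Nat.gcd_dvd_left _ _)
      exact dvd_trans (dvd_trans (Nat.gcd_dvd_right _ _) (Nat.lcm_dvd_mul _ _)) dvd_rfl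
    have h2 : Nat.gcd a (Lf N j * (N - j)) ∣ Nat.gcd a (Lf N j) * Nat.gcd a (N - j) :=
      Nat.gcd_mul_right_dvd_mul_gcd a _ _
    exact dvd_trans (dvd_trans h1 h2)
      (mul_dvd_mul (gcd_Lf_dvd N a j) dvd_rfl)

private lemma prod_sub_eq_factorial (j : ℕ) : (∏ i ∈ range j, (j - i)) = j.factorial := by
  rw [← Finset.prod_range_add_one_eq_factorial, ← Finset.prod_range_reflect]
  exact prod_congr rfl fun i hi => by simp only [mem_range] at hi; omega

private lemma gcd_le_factorial (N k : ℕ) (hN : k ≤ N) (j : ℕ) (hj : j ≤ k) :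
    Nat.gcd (Lf N j) (N - j) ≤ k.factorial := by
  have h1 : Nat.gcd (N - j) (Lf N j) ∣ (∏ i ∈ range j, Nat.gcd (N - j) (N - i)) :=
    gcd_Lf_dvd N (N - j) j
  have h2 : (∏ i ∈ range j, Nat.gcd (N - j) (N - i)) ∣ ∏ i ∈ range j, (j - i) := by
    apply Finset.prod_dvd_prod_of_dvd
    intro i hi
    simp only [mem_range] at hi
    have := Nat.dvd_sub (Nat.gcd_dvd_right (N - j) (N - i)) (Nat.gcd_dvd_left (N - j) (N - i))
    rwa [show N - i - (N - j) = j - i by omega] at this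
  rw [Nat.gcd_comm]
  calc Nat.gcd (N - j) (Lf N j) ≤ j.factorial := by
        rw [← prod_sub_eq_factorial j]
        exact Nat.le_of_dvd (by rw [prod_sub_eq_factorial]; exact Nat.factorial_pos j)
          (h1.trans h2)
    _ ≤ k.factorial := Nat.factorial_le hj

private lemma Lf_bound (N k : ℕ) (hN : k ≤ N) :
    ∀ j, j ≤ k → (∏ i ∈ range j, (N - i)) ≤ Lf N j * k.factorial ^ j
  | 0, _ => by simp [Lf]
  | j + 1, h => by
    have ih := Lf_bound N k hN j (by omega)
    have hg := gcd_le_factorial N k hN j (by omega)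
    have key : Nat.gcd (Lf N j) (N - j) * Nat.lcm (Lf N j) (N - j) = Lf N j * (N - j) :=
      Nat.gcd_mul_lcm _ _
    calc (∏ i ∈ range (j + 1), (N - i)) = (∏ i ∈ range j, (N - i)) * (N - j) :=
          prod_range_succ _ _
      _ ≤ (Lf N j * k.factorial ^ j) * (N - j) := Nat.mul_le_mul_right _ ih
      _ = (Lf N j * (N - j)) * k.factorial ^ j := by ring
      _ = (Nat.gcd (Lf N j) (N - j) * Lf N (j + 1)) * k.factorial ^ j := by
          rw [show Lf N (j + 1) = Nat.lcm (Lf N j) (N - j) from rfl, key]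
      _ ≤ (k.factorial * Lf N (j + 1)) * k.factorial ^ j :=
          Nat.mul_le_mul_right _ (Nat.mul_le_mul_right _ hg)
      _ = Lf N (j + 1) * k.factorial ^ (j + 1) := by ring

private lemma Lf_rep (N : ℕ) : ∀ j, 1 ≤ j → j ≤ N → ∃ c : ℕ → ℤ,
    (∑ i ∈ range j, (c i : ℝ) / ((N - i : ℕ) : ℝ)) = 1 / (Lf N j : ℝ) := by
  intro j
  induction j with
  | zero => omega
  | succ j ih =>
    intro _ hjN
    by_cases hj0 : j = 0
    · subst hj0
      refine ⟨fun _ => 1, ?_⟩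
      have : Lf N 1 = N - 0 := by simp [Lf]
      rw [this]
      simp
    · obtain ⟨c, hc⟩ := ih (by omega) (by omega)
      set g : ℕ := Nat.gcd (Lf N j) (N - j) with hgdef
      set A : ℤ := Nat.gcdA (Lf N j) (N - j)
      set B : ℤ := Nat.gcdB (Lf N j) (N - j)
      have hbez : (g : ℤ) = (Lf N j : ℤ) * A + ((N - j : ℕ) : ℤ) * B :=
        Nat.gcd_eq_gcd_ab _ _
      have hkey : (g : ℕ) * Lf N (j + 1) = Lf N j * (N - j) := Nat.gcd_mul_lcm _ _
      have hLpos : 0 < Lf N j := Lf_pos N j (by omega)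
      have hLpos' : 0 < Lf N (j + 1) := Lf_pos N (j + 1) (by omega)
      have hNj : 0 < N - j := by omega
      refine ⟨fun i => if i = j then A else B * c i, ?_⟩
      rw [sum_range_succ]
      have h1 : (∑ i ∈ range j, ((if i = j then A else B * c i : ℤ) : ℝ) / ((N - i : ℕ) : ℝ))
          = (B : ℝ) * (1 / (Lf N j : ℝ)) := by
        rw [← hc, mul_sum]
        refine sum_congr rfl fun i hi => ?_
        simp only [mem_range] at hi
        rw [if_neg (by omega)]
        push_cast
        ring
      rw [h1]
      simp only [if_pos rfl]
      have e1 : ((g : ℕ) : ℝ) = (Lf N j : ℝ) * A + ((N - j : ℕ) : ℝ) * B := by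
        exact_mod_cast congrArg (fun x : ℤ => (x : ℝ)) hbez
      have e2 : ((g : ℕ) : ℝ) * (Lf N (j + 1) : ℝ) = (Lf N j : ℝ) * ((N - j : ℕ) : ℝ) := by
        exact_mod_cast congrArg (fun x : ℕ => (x : ℝ)) hkey
      have hL0 : (Lf N j : ℝ) ≠ 0 := by positivity
      have hL0' : (Lf N (j + 1) : ℝ) ≠ 0 := by positivity
      have hN0 : ((N - j : ℕ) : ℝ) ≠ 0 := by positivity
      field_simp
      rw [if_pos trivial]
      nlinarith [e1, e2, mul_pos (Nat.cast_pos.mpr hLpos : (0:ℝ) < (Lf N j : ℝ)) (Nat.cast_pos.mpr hNj : (0:ℝ) < ((N - j : ℕ) : ℝ))]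

theorem stmt0 (k : ℕ) (hk : 0 < k) :
    ∃ C : ℝ, 0 < C ∧ ∀ (θ : ℝ) (N : ℕ), 0 < N →
      ∃ a q : Fin k → ℤ, (∀ i, 1 ≤ q i ∧ q i ≤ N) ∧
        |(∑ i, (a i : ℝ) / (q i : ℝ)) - θ| ≤ C / (N : ℝ) ^ k := by
  have hkk : 0 < k * k.factorial := Nat.mul_pos hk k.factorial_pos
  have hCpos : (0 : ℝ) < ((k * k.factorial : ℕ) : ℝ) ^ k :=
    pow_pos (by exact_mod_cast hkk) k
  refine ⟨((k * k.factorial : ℕ) : ℝ) ^ k, hCpos, ?_⟩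
  intro θ N hN
  by_cases hNk : k ≤ N
  · -- large N
    obtain ⟨c, hc⟩ := Lf_rep N k hk hNk
    set L := Lf N k with hLdef
    have hLpos : 0 < L := Lf_pos N k hNk
    have hLR : (0 : ℝ) < (L : ℝ) := by exact_mod_cast hLpos
    set m : ℤ := round (θ * (L : ℝ)) with hm
    refine ⟨fun i => m * c (i : ℕ), fun i => ((N - (i : ℕ) : ℕ) : ℤ), ?_, ?_⟩
    · intro i
      have := i.isLt
      constructor
      · show (1 : ℤ) ≤ ((N - (i : ℕ) : ℕ) : ℤ)
        exact_mod_cast (by omega : 1 ≤ N - (i : ℕ))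
      · show ((N - (i : ℕ) : ℕ) : ℤ) ≤ (N : ℤ)
        exact_mod_cast Nat.sub_le N (i : ℕ)
    · have hs : (∑ i : Fin k, ((m * c (i : ℕ) : ℤ) : ℝ) / (((N - (i : ℕ) : ℕ) : ℤ) : ℝ))
          = (m : ℝ) * (1 / (L : ℝ)) := by
        rw [← hc, Fin.sum_univ_eq_sum_range (fun i => ((m * c i : ℤ) : ℝ) / (((N - i : ℕ) : ℤ) : ℝ)),
          mul_sum]
        refine sum_congr rfl fun i hi => ?_
        push_cast
        ring
      rw [hs]
      have hround : |θ * (L : ℝ) - (m : ℝ)| ≤ 1 := by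
        have := abs_sub_round (θ * (L : ℝ))
        rw [← hm] at this
        linarith
      have key : |(m : ℝ) * (1 / (L : ℝ)) - θ| ≤ 1 / (L : ℝ) := by
        have heq : (m : ℝ) * (1 / (L : ℝ)) - θ = -((θ * (L : ℝ) - (m : ℝ)) / (L : ℝ)) := by
          field_simp
          ring
        rw [heq, abs_neg, abs_div, abs_of_pos hLR]
        gcongr
      refine key.trans ?_
      -- 1 / L ≤ C / N ^ k
      have hprod : N ^ k ≤ k ^ k * ∏ i ∈ range k, (N - i) := by
        calc N ^ k = ∏ _i ∈ range k, N := by rw [prod_const, card_range]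
          _ ≤ ∏ i ∈ range k, (k * (N - i)) := by
              refine Finset.prod_le_prod' fun i hi => ?_
              simp only [mem_range] at hi
              have h1 : N - k ≤ k * (N - k) := Nat.le_mul_of_pos_left _ hk
              have h2 : k * (N - k + 1) ≤ k * (N - i) := Nat.mul_le_mul_left k (by omega)
              have h3 : k * (N - k + 1) = k * (N - k) + k := by ring
              have h4 : N - k + k = N := by omega
              linarith
          _ = k ^ k * ∏ i ∈ range k, (N - i) := by
              rw [prod_mul_distrib, prod_const, card_range]
      have hbound : N ^ k ≤ L * (k * k.factorial) ^ k := by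
        calc N ^ k ≤ k ^ k * ∏ i ∈ range k, (N - i) := hprod
          _ ≤ k ^ k * (L * k.factorial ^ k) :=
              Nat.mul_le_mul_left _ (Lf_bound N k hNk k le_rfl)
          _ = L * (k * k.factorial) ^ k := by rw [mul_pow]; ring
      have hboundR : ((N : ℝ)) ^ k ≤ (L : ℝ) * ((k * k.factorial : ℕ) : ℝ) ^ k := by
        exact_mod_cast hbound
      have hNR : (0 : ℝ) < (N : ℝ) ^ k := by positivity
      rw [div_le_div_iff₀ hLR hNR]
      nlinarith
  · -- small N
    push_neg at hNk
    refine ⟨fun i => if (i : ℕ) = 0 then round θ else 0, fun _ => 1, fun i => ⟨le_refl 1, by show (1:ℤ) ≤ (N:ℤ); exact_mod_cast hN⟩, ?_⟩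
    have hs : (∑ i : Fin k, ((if (i : ℕ) = 0 then round θ else 0 : ℤ) : ℝ) / ((1 : ℤ) : ℝ))
        = ((round θ : ℤ) : ℝ) := by
      rw [Fin.sum_univ_eq_sum_range (fun i => ((if i = 0 then round θ else 0 : ℤ) : ℝ) / ((1 : ℤ) : ℝ))]
      rw [Finset.sum_eq_single 0]
      · simp
      · intro b _ hb; simp [hb]
      · intro h; exact absurd (mem_range.mpr hk) h
    rw [hs]
    have h1 : |((round θ : ℤ) : ℝ) - θ| ≤ 1 / 2 := by
      rw [abs_sub_comm]; exact abs_sub_round θ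
    refine h1.trans ?_
    have hNR : (0 : ℝ) < (N : ℝ) ^ k := by positivity
    have hle : ((N : ℝ)) ^ k ≤ ((k * k.factorial : ℕ) : ℝ) ^ k := by
      apply pow_le_pow_left₀ (by positivity)
      exact_mod_cast le_trans (le_of_lt hNk) (Nat.le_mul_of_pos_right k k.factorial_pos)
    have : (1 : ℝ) ≤ ((k * k.factorial : ℕ) : ℝ) ^ k / (N : ℝ) ^ k :=
      (one_le_div hNR).mpr hle
    linarith
end

section
/- For every positive integer k there exist constants c > 0 and x₀ ≥ 1 such that for all real x ≥ x₀, the sum of q₁·q₂···q_k over all k-tuples of positive integers (q₁,…,q_k) with each qᵢ ≤ x and gcd(qᵢ, qⱼ) = 1 for all i < j, is at least c·x^{2k}. -/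
open Finset

lemma residue_count (p T W : ℕ) (hp : 0 < p) (hcop : Nat.Coprime p W) :
    ((Finset.Icc T (2*T-1)).filter (fun t => p ∣ 1 + t*W)).card ≤ T/p + 1 := by
  classical
  have key : ∀ t t' : ℕ, T ≤ t → p ∣ 1 + t*W → T ≤ t' → p ∣ 1 + t'*W → t' ≤ t →
      (t-T)/p = (t'-T)/p → t = t' := by
    intro t t' h1 h2 h3 h4 hle hdiv
    have hd : p ∣ (t - t') * W := by
      have he : (1 + t*W) - (1 + t'*W) = (t - t')*W := by
        rw [Nat.sub_mul]; omega
      exact he ▸ Nat.dvd_sub h2 h4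
    have hdt : p ∣ t - t' := hcop.dvd_of_dvd_mul_right hd
    have e1 := Nat.div_add_mod (t - T) p
    have e2 := Nat.div_add_mod (t' - T) p
    rw [hdiv] at e1
    have m1 : (t - T) % p < p := Nat.mod_lt _ hp
    have m2 : (t' - T) % p < p := Nat.mod_lt _ hp
    have hlt : t - t' < p := by omega
    have := Nat.eq_zero_of_dvd_of_lt hdt hlt
    omega
  calc ((Finset.Icc T (2*T-1)).filter (fun t => p ∣ 1 + t*W)).card
      ≤ (Finset.range (T/p + 1)).card := by
        apply Finset.card_le_card_of_injOn (fun t => (t - T)/p)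
        · intro t ht
          simp only [Finset.mem_coe, mem_filter, mem_Icc] at ht
          simp only [Finset.mem_coe, mem_range]
          have h1 : (t-T)/p ≤ T/p := Nat.div_le_div_right (by omega)
          omega
        · intro t ht t' ht' heq
          simp only [Finset.coe_filter, Set.mem_setOf_eq, mem_Icc] at ht ht'
          rcases le_total t' t with h | h
          · exact key t t' ht.1.1 ht.2 ht'.1.1 ht'.2 h heq
          · exact (key t' t ht'.1.1 ht'.2 ht.1.1 ht.2 h heq.symm).symm
    _ = T/p + 1 := by simp

lemma aux_sub (k W T P : ℕ) (hW : 0 < W) (hT1 : 1 ≤ T)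
    (hWdvd : ∀ p : ℕ, p.Prime → p < P → p ∣ W) :
    (Fintype.piFinset fun _ : Fin k => Finset.Icc T (2*T-1)).filter
        (fun t => ¬ ∀ i j : Fin k, i < j → Nat.Coprime (1 + t i * W) (1 + t j * W)) ⊆
      (Finset.univ.filter (fun ij : Fin k × Fin k => ij.1 < ij.2)).biUnion (fun ij =>
        ((Finset.Icc P (2*T*W)).filter Nat.Prime).biUnion (fun p =>
          (Fintype.piFinset fun _ : Fin k => Finset.Icc T (2*T-1)).filter
            (fun t => p ∣ 1 + t ij.1 * W ∧ p ∣ 1 + t ij.2 * W))) := by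
  intro t ht
  simp only [mem_filter] at ht
  obtain ⟨htG, hnc⟩ := ht
  push_neg at hnc
  obtain ⟨i, j, hij, hncop⟩ := hnc
  set g := Nat.gcd (1 + t i * W) (1 + t j * W) with hg
  have hg1 : g ≠ 1 := hncop
  set p := g.minFac with hpdef
  have hp : p.Prime := Nat.minFac_prime hg1
  have hpq1 : p ∣ 1 + t i * W := (Nat.minFac_dvd g).trans (Nat.gcd_dvd_left _ _)
  have hpq2 : p ∣ 1 + t j * W := (Nat.minFac_dvd g).trans (Nat.gcd_dvd_right _ _)
  have hpW : ¬ p ∣ W := by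
    intro h
    have h1 : p ∣ t i * W := Dvd.dvd.mul_left h (t i)
    have h2 : p ∣ 1 := by
      have := Nat.dvd_sub hpq1 h1
      simpa using this
    exact hp.one_lt.ne' (Nat.dvd_one.mp h2)
  have hPp : P ≤ p := by
    by_contra hc
    push_neg at hc
    exact hpW (hWdvd p hp hc)
  have hti : t i ∈ Finset.Icc T (2*T-1) := by
    rw [Fintype.mem_piFinset] at htG
    exact htG i
  have htiu : t i ≤ 2*T-1 := (Finset.mem_Icc.mp hti).2
  have hpM : p ≤ 2*T*W := by
    have hq1pos : 0 < 1 + t i * W := by omega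
    have hle : p ≤ 1 + t i * W := Nat.le_of_dvd hq1pos hpq1
    have h2T : 2*T-1+1 = 2*T := by omega
    have : (2*T-1)*W + W = 2*T*W := by
      calc (2*T-1)*W + W = (2*T-1+1)*W := by rw [Nat.add_mul, one_mul]
        _ = 2*T*W := by rw [h2T]
    have hbb : t i * W ≤ (2*T-1)*W := Nat.mul_le_mul_right _ htiu
    omega
  rw [Finset.mem_biUnion]
  refine ⟨(i, j), Finset.mem_filter.mpr ⟨Finset.mem_univ _, hij⟩, ?_⟩
  rw [Finset.mem_biUnion]
  exact ⟨p, Finset.mem_filter.mpr ⟨Finset.mem_Icc.mpr ⟨hPp, hpM⟩, hp⟩,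
    Finset.mem_filter.mpr ⟨htG, hpq1, hpq2⟩⟩


lemma aux_per (k W T : ℕ) (hW : 0 < W) (hT1 : 1 ≤ T) (hk2' : 2 ≤ k)
    (hcardIcc : (Finset.Icc T (2*T-1)).card = T)
    (i j : Fin k) (hij : i < j) (p : ℕ) (hp : p.Prime) :
    ((((Fintype.piFinset fun _ : Fin k => Finset.Icc T (2*T-1)).filter
        (fun t => p ∣ 1 + t i * W ∧ p ∣ 1 + t j * W)).card : ℝ))
      ≤ ((T:ℝ)/p + 1)^2 * (T:ℝ)^(k-2) := by
  classical
  have hne : j ≠ i := (ne_of_lt hij).symm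
  set R : Finset ℕ := (Finset.Icc T (2*T-1)).filter (fun t => p ∣ 1 + t*W) with hR
  -- subset of a product box
  have hsub : (Fintype.piFinset fun _ : Fin k => Finset.Icc T (2*T-1)).filter
        (fun t => p ∣ 1 + t i * W ∧ p ∣ 1 + t j * W) ⊆
      Fintype.piFinset (fun l : Fin k => if l = i then R else if l = j then R else Finset.Icc T (2*T-1)) := by
    intro t ht
    simp only [mem_filter, Fintype.mem_piFinset] at ht ⊢
    intro l
    split_ifs with h1 h2
    · subst h1; exact Finset.mem_filter.mpr ⟨ht.1 l, ht.2.1⟩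
    · subst h2; exact Finset.mem_filter.mpr ⟨ht.1 l, ht.2.2⟩
    · exact ht.1 l
  have hcard : ((Fintype.piFinset fun _ : Fin k => Finset.Icc T (2*T-1)).filter
        (fun t => p ∣ 1 + t i * W ∧ p ∣ 1 + t j * W)).card ≤ R.card * R.card * T^(k-2) := by
    refine le_trans (Finset.card_le_card hsub) ?_
    rw [Fintype.card_piFinset]
    rw [← Finset.mul_prod_erase Finset.univ _ (Finset.mem_univ i)]
    rw [← Finset.mul_prod_erase (Finset.univ.erase i) _ (Finset.mem_erase.mpr ⟨hne, Finset.mem_univ j⟩)]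
    have e1 : (if i = i then R else if i = j then R else Finset.Icc T (2*T-1)).card = R.card := by simp
    have e2 : (if j = i then R else if j = j then R else Finset.Icc T (2*T-1)).card = R.card := by
      simp [hne]
    rw [e1, e2]
    have e3 : ∏ l ∈ (Finset.univ.erase i).erase j,
        (if l = i then R else if l = j then R else Finset.Icc T (2*T-1)).card = T^(k-2) := by
      have : ∀ l ∈ (Finset.univ.erase i).erase j,
          (if l = i then R else if l = j then R else Finset.Icc T (2*T-1)).card = T := by
        intro l hl
        simp only [Finset.mem_erase, Finset.mem_univ] at hl
        rw [if_neg hl.2.1, if_neg hl.1, hcardIcc]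
      rw [Finset.prod_congr rfl this, Finset.prod_const]
      congr 1
      rw [Finset.card_erase_of_mem (Finset.mem_erase.mpr ⟨hne, Finset.mem_univ j⟩),
        Finset.card_erase_of_mem (Finset.mem_univ i)]
      simp; omega
    rw [e3, ← mul_assoc]
  have hRcop : R.card ≤ T/p + 1 := by
    by_cases hpW : p ∣ W
    · have : R = ∅ := by
        rw [hR]
        apply Finset.filter_false_of_mem
        intro t _ hdvd
        have h1 : p ∣ t * W := Dvd.dvd.mul_left hpW t
        have h2 : p ∣ 1 := by
          have := Nat.dvd_sub hdvd h1
          simpa using this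
        exact hp.one_lt.ne' (Nat.dvd_one.mp h2)
      simp [this]
    · exact residue_count p T W hp.pos ((Nat.Prime.coprime_iff_not_dvd hp).mpr hpW)
  calc ((((Fintype.piFinset fun _ : Fin k => Finset.Icc T (2*T-1)).filter
        (fun t => p ∣ 1 + t i * W ∧ p ∣ 1 + t j * W)).card : ℝ))
      ≤ ((R.card * R.card * T^(k-2) : ℕ) : ℝ) := by exact_mod_cast hcard
    _ ≤ ((T:ℝ)/p + 1)^2 * (T:ℝ)^(k-2) := by
        push_cast
        have hc : (R.card : ℝ) ≤ (T:ℝ)/p + 1 := by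
          calc (R.card : ℝ) ≤ ((T/p + 1 : ℕ) : ℝ) := by exact_mod_cast hRcop
            _ ≤ (T:ℝ)/p + 1 := by
              push_cast
              have := Nat.cast_div_le (α := ℝ) (m := T) (n := p)
              linarith
        have h0 : (0:ℝ) ≤ (R.card : ℝ) := by positivity
        have h1 : (0:ℝ) ≤ (T:ℝ)^(k-2) := by positivity
        have h2 : (R.card:ℝ)*(R.card:ℝ) ≤ ((T:ℝ)/p+1)^2 := by nlinarith
        exact mul_le_mul_of_nonneg_right h2 h1

lemma aux_prsum (k W T P : ℕ) (hW : 0 < W) (hT1 : 1 ≤ T) (hk2 : 16 ≤ P) (hT : P * W ≤ T) :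
    ∑ p ∈ (Finset.Icc P (2*T*W)).filter Nat.Prime, (((T:ℝ)/p + 1)^2)
      ≤ 4*(T:ℝ)^2/P + 4*T*W := by
  set M : ℕ := 2*T*W with hM
  have hPM : P ≤ M := by
    calc P ≤ P*W := Nat.le_mul_of_pos_right _ hW
      _ ≤ T := hT
      _ ≤ 2*T*W := by nlinarith
  have h1 : ∑ p ∈ (Finset.Icc P M).filter Nat.Prime, (((T:ℝ)/p + 1)^2)
      ≤ ∑ n ∈ Finset.Icc P M, (((T:ℝ)/n + 1)^2) := by
    apply Finset.sum_le_sum_of_subset_of_nonneg (Finset.filter_subset _ _)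
    intro n _ _
    positivity
  have h2 : ∑ n ∈ Finset.Icc P M, (((T:ℝ)/n + 1)^2)
      ≤ ∑ n ∈ Finset.Icc P M, (2*(T:ℝ)^2 * ((n:ℝ)^2)⁻¹ + 2) := by
    apply Finset.sum_le_sum
    intro n hn
    have hn1 : (1:ℝ) ≤ (n:ℝ) := by
      have := (Finset.mem_Icc.mp hn).1
      have : 1 ≤ n := by omega
      exact_mod_cast this
    have hnpos : (0:ℝ) < n := by linarith
    have ha : (0:ℝ) ≤ (T:ℝ)/n := by positivity
    have key : ((T:ℝ)/n + 1)^2 ≤ 2*((T:ℝ)/n)^2 + 2 := by nlinarith [sq_nonneg ((T:ℝ)/n - 1)]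
    have : ((T:ℝ)/n)^2 = (T:ℝ)^2 * ((n:ℝ)^2)⁻¹ := by
      field_simp
    linarith [key, this ▸ key]
  have h3 : ∑ n ∈ Finset.Icc P M, ((n:ℝ)^2)⁻¹ ≤ 2/P := by
    have hP1 : P - 1 ≠ 0 := by omega
    have hIcc : Finset.Icc P M = Finset.Ioc (P-1) M := by
      rw [← Finset.Icc_add_one_left_eq_Ioc]
      congr 1
      omega
    rw [hIcc]
    calc ∑ n ∈ Finset.Ioc (P-1) M, ((n:ℝ)^2)⁻¹ ≤ ((P-1:ℕ):ℝ)⁻¹ - ((M:ℕ):ℝ)⁻¹ :=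
          sum_Ioc_inv_sq_le_sub hP1 (by omega)
      _ ≤ ((P-1:ℕ):ℝ)⁻¹ := by
          have : (0:ℝ) ≤ ((M:ℕ):ℝ)⁻¹ := by positivity
          linarith
      _ ≤ 2/P := by
          have hPr : (16:ℝ) ≤ (P:ℝ) := by exact_mod_cast hk2
          have hd1 : (0:ℝ) < ((P-1:ℕ):ℝ) := by exact_mod_cast Nat.pos_of_ne_zero hP1
          have hd2 : (0:ℝ) < (P:ℝ) := by linarith
          rw [inv_eq_one_div, div_le_div_iff₀ hd1 hd2]
          push_cast [Nat.cast_sub (by omega : 1 ≤ P)]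
          linarith
  have h4 : (Finset.Icc P M).card ≤ M := by
    rw [Nat.card_Icc]; omega
  calc ∑ p ∈ (Finset.Icc P M).filter Nat.Prime, (((T:ℝ)/p + 1)^2)
      ≤ ∑ n ∈ Finset.Icc P M, (2*(T:ℝ)^2 * ((n:ℝ)^2)⁻¹ + 2) := le_trans h1 h2
    _ = 2*(T:ℝ)^2 * (∑ n ∈ Finset.Icc P M, ((n:ℝ)^2)⁻¹) + 2 * (Finset.Icc P M).card := by
        rw [Finset.sum_add_distrib, ← Finset.mul_sum, Finset.sum_const, nsmul_eq_mul]
        ring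
    _ ≤ 2*(T:ℝ)^2 * (2/P) + 2 * M := by
        have hc : ((Finset.Icc P M).card : ℝ) ≤ (M:ℝ) := by exact_mod_cast h4
        have : (0:ℝ) ≤ 2*(T:ℝ)^2 := by positivity
        nlinarith [h3]
    _ ≤ 4*(T:ℝ)^2/P + 4*T*W := by
        have : 2*(T:ℝ)^2 * (2/P) = 4*(T:ℝ)^2/P := by ring
        rw [this, hM]
        push_cast
        nlinarith

lemma aux_h4 (k W T : ℕ) (hk : 0 < k) (hk2' : 2 ≤ k) (hW : 0 < W) (hT1 : 1 ≤ T)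
    (hT : 16 * k^2 * W ≤ T) :
    (k:ℝ)^2 * ((4*(T:ℝ)^2/(16*k^2 : ℕ) + 4*T*W) * (T:ℝ)^(k-2)) ≤ (T:ℝ)^k / 2 := by
  have hTpos : (0:ℝ) < T := by exact_mod_cast hT1
  have hkpos : (0:ℝ) < k := by exact_mod_cast hk
  have hWpos : (0:ℝ) < W := by exact_mod_cast hW
  have hTW : 16*(k:ℝ)^2*(W:ℝ) ≤ (T:ℝ) := by exact_mod_cast hT
  have e : (T:ℝ)^k = (T:ℝ)^(k-2) * (T:ℝ)^2 := by
    rw [← pow_add]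
    congr 1
    omega
  have hA : (0:ℝ) ≤ (T:ℝ)^(k-2) := by positivity
  have h1 : (k:ℝ)^2 * (4*(T:ℝ)^2/((16*k^2 : ℕ):ℝ)) = (T:ℝ)^2/4 := by
    push_cast
    field_simp
    ring
  have h2 : (k:ℝ)^2 * (4*(T:ℝ)*(W:ℝ)) ≤ (T:ℝ)*(T:ℝ)/4 := by
    nlinarith
  rw [e]
  calc (k:ℝ)^2 * ((4*(T:ℝ)^2/(16*k^2 : ℕ) + 4*T*W) * (T:ℝ)^(k-2))
      = ((k:ℝ)^2 * (4*(T:ℝ)^2/((16*k^2 : ℕ):ℝ)) + (k:ℝ)^2 * (4*(T:ℝ)*(W:ℝ))) * (T:ℝ)^(k-2) := by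
        ring
    _ ≤ ((T:ℝ)^2/4 + (T:ℝ)*(T:ℝ)/4) * (T:ℝ)^(k-2) := by
        apply mul_le_mul_of_nonneg_right _ hA
        rw [h1]
        linarith
    _ ≤ (T:ℝ)^(k-2) * (T:ℝ)^2 / 2 := by
        nlinarith


set_option maxHeartbeats 1000000 in
lemma good_count (k W T : ℕ) (hk : 0 < k)
    (hWdvd : ∀ p : ℕ, p.Prime → p < 16*k^2 → p ∣ W) (hW : 0 < W)
    (hT : 16 * k^2 * W ≤ T) :
    ((T:ℝ)^k) / 2 ≤ (((Fintype.piFinset fun _ : Fin k => Finset.Icc T (2*T-1)).filter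
      (fun t => ∀ i j : Fin k, i < j → Nat.Coprime (1 + t i * W) (1 + t j * W))).card : ℝ) := by
  classical
  set P : ℕ := 16*k^2 with hP
  have hk2 : 16 ≤ P := by
    have h1 : 1 ≤ k^2 := Nat.one_le_pow _ _ hk
    calc 16 = 16*1 := by ring
      _ ≤ 16*k^2 := Nat.mul_le_mul_left _ h1
  have hT1 : 1 ≤ T := le_trans (by nlinarith) hT
  have hTpos : (0:ℝ) < T := by exact_mod_cast hT1
  set Grid := Fintype.piFinset fun _ : Fin k => Finset.Icc T (2*T-1) with hGrid
  have hcardIcc : (Finset.Icc T (2*T-1)).card = T := by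
    rw [Nat.card_Icc]; omega
  have hGridCard : Grid.card = T^k := by
    rw [hGrid, Fintype.card_piFinset]
    simp [hcardIcc]
  by_cases hk1 : k = 1
  · subst hk1
    have heq : Grid.filter (fun t => ∀ i j : Fin 1, i < j → Nat.Coprime (1 + t i * W) (1 + t j * W)) = Grid := by
      apply Finset.filter_true_of_mem
      intro t _ i j hij
      exact absurd hij (by omega)
    rw [hGrid] at heq
    rw [heq, hGridCard]
    push_cast
    linarith
  have hk2' : 2 ≤ k := by omega
  set M : ℕ := 2*T*W with hM
  set pr : Finset ℕ := (Finset.Icc P M).filter Nat.Prime with hpr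
  set cond : (Fin k → ℕ) → Prop := fun t => ∀ i j : Fin k, i < j → Nat.Coprime (1 + t i * W) (1 + t j * W) with hcond
  set pairs : Finset (Fin k × Fin k) := Finset.univ.filter (fun ij => ij.1 < ij.2) with hpairs
  -- bad set covering
  have hsub : Grid.filter (fun t => ¬ cond t) ⊆ pairs.biUnion (fun ij => pr.biUnion (fun p =>
      Grid.filter (fun t => p ∣ 1 + t ij.1 * W ∧ p ∣ 1 + t ij.2 * W))) := by
    exact aux_sub k W T P hW hT1 hWdvd
  -- per (pair, prime) cardinality bound
  have hper : ∀ ij ∈ pairs, ∀ p ∈ pr,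
      ((Grid.filter (fun t => p ∣ 1 + t ij.1 * W ∧ p ∣ 1 + t ij.2 * W)).card : ℝ)
        ≤ ((T:ℝ)/p + 1)^2 * (T:ℝ)^(k-2) := by
    intro ij hij p hp
    exact aux_per k W T hW hT1 hk2' hcardIcc ij.1 ij.2 (Finset.mem_filter.mp hij).2
      p (Finset.mem_filter.mp hp).2
  -- sum over primes bound
  have hprsum : ∑ p ∈ pr, (((T:ℝ)/p + 1)^2) ≤ 4*(T:ℝ)^2/P + 4*T*W := by
    exact aux_prsum k W T P hW hT1 hk2 hT
  -- combine
  have hbad : ((Grid.filter (fun t => ¬ cond t)).card : ℝ) ≤ (T:ℝ)^k / 2 := by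
    have h1 : ((Grid.filter (fun t => ¬ cond t)).card : ℝ) ≤
        ∑ ij ∈ pairs, ∑ p ∈ pr, ((Grid.filter (fun t => p ∣ 1 + t ij.1 * W ∧ p ∣ 1 + t ij.2 * W)).card : ℝ) := by
      have := Finset.card_le_card hsub
      calc ((Grid.filter (fun t => ¬ cond t)).card : ℝ)
          ≤ ((pairs.biUnion (fun ij => pr.biUnion (fun p =>
              Grid.filter (fun t => p ∣ 1 + t ij.1 * W ∧ p ∣ 1 + t ij.2 * W)))).card : ℝ) := by
            exact_mod_cast this
        _ ≤ ∑ ij ∈ pairs, ((pr.biUnion (fun p =>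
              Grid.filter (fun t => p ∣ 1 + t ij.1 * W ∧ p ∣ 1 + t ij.2 * W))).card : ℝ) := by
            exact_mod_cast Finset.card_biUnion_le
        _ ≤ ∑ ij ∈ pairs, ∑ p ∈ pr, ((Grid.filter (fun t => p ∣ 1 + t ij.1 * W ∧ p ∣ 1 + t ij.2 * W)).card : ℝ) := by
            apply Finset.sum_le_sum
            intro ij _
            exact_mod_cast Finset.card_biUnion_le
    have h2 : ∑ ij ∈ pairs, ∑ p ∈ pr, ((Grid.filter (fun t => p ∣ 1 + t ij.1 * W ∧ p ∣ 1 + t ij.2 * W)).card : ℝ)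
        ≤ ∑ ij ∈ pairs, (4*(T:ℝ)^2/P + 4*T*W) * (T:ℝ)^(k-2) := by
      apply Finset.sum_le_sum
      intro ij hij
      calc ∑ p ∈ pr, ((Grid.filter (fun t => p ∣ 1 + t ij.1 * W ∧ p ∣ 1 + t ij.2 * W)).card : ℝ)
          ≤ ∑ p ∈ pr, ((T:ℝ)/p + 1)^2 * (T:ℝ)^(k-2) := Finset.sum_le_sum (fun p hp => hper ij hij p hp)
        _ = (∑ p ∈ pr, ((T:ℝ)/p + 1)^2) * (T:ℝ)^(k-2) := by rw [Finset.sum_mul]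
        _ ≤ (4*(T:ℝ)^2/P + 4*T*W) * (T:ℝ)^(k-2) := by
            apply mul_le_mul_of_nonneg_right hprsum (by positivity)
    have h3 : ∑ ij ∈ pairs, ((4*(T:ℝ)^2/P + 4*T*W) * (T:ℝ)^(k-2)) ≤
        (k:ℝ)^2 * ((4*(T:ℝ)^2/P + 4*T*W) * (T:ℝ)^(k-2)) := by
      rw [Finset.sum_const, nsmul_eq_mul]
      apply mul_le_mul_of_nonneg_right _ (by positivity)
      have : pairs.card ≤ k^2 := by
        calc pairs.card ≤ (Finset.univ : Finset (Fin k × Fin k)).card := Finset.card_filter_le _ _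
          _ = k^2 := by simp [sq]
      exact_mod_cast this
    have h4 : (k:ℝ)^2 * ((4*(T:ℝ)^2/P + 4*T*W) * (T:ℝ)^(k-2)) ≤ (T:ℝ)^k / 2 := by
      exact aux_h4 k W T hk hk2' hW hT1 hT
    linarith
  -- conclude
  have hsplit : (Grid.filter cond).card + (Grid.filter (fun t => ¬ cond t)).card = T^k := by
    rw [Finset.card_filter_add_card_filter_not, hGridCard]
  have hc : ((Grid.filter cond).card : ℝ) + ((Grid.filter (fun t => ¬ cond t)).card : ℝ) = (T:ℝ)^k := by
    exact_mod_cast congrArg (Nat.cast : ℕ → ℝ) hsplit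
  linarith [hc, hbad]

set_option maxHeartbeats 1000000 in
theorem stmt1 (k : ℕ) (hk : 0 < k) :
    ∃ c : ℝ, 0 < c ∧ ∃ x₀ : ℝ, 1 ≤ x₀ ∧ ∀ x : ℝ, x₀ ≤ x →
      c * x ^ (2 * k) ≤
        ∑ q ∈ (Fintype.piFinset fun _ : Fin k => Finset.Icc 1 ⌊x⌋₊).filter
            (fun q => ∀ i j : Fin k, i < j → Nat.Coprime (q i) (q j)),
          ∏ i, (q i : ℝ) := by
  classical
  set W : ℕ := ∏ p ∈ (Finset.range (16*k^2)).filter Nat.Prime, p with hWdef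
  have hW : 0 < W := Finset.prod_pos (fun p hp => ((Finset.mem_filter.mp hp).2).pos)
  have hWdvd : ∀ p : ℕ, p.Prime → p < 16*k^2 → p ∣ W :=
    fun p hp hlt => Finset.dvd_prod_of_mem _ (Finset.mem_filter.mpr ⟨Finset.mem_range.mpr hlt, hp⟩)
  have hWr : (1:ℝ) ≤ W := by exact_mod_cast hW
  have hkr : (1:ℝ) ≤ k := by exact_mod_cast hk
  have hx₀nat : 1 ≤ 100*k^2*W^2 := Nat.one_le_iff_ne_zero.mpr (by positivity)
  refine ⟨1 / (2 * 64^k * (W:ℝ)^k), by positivity, ((100 * k^2 * W^2 : ℕ):ℝ), by exact_mod_cast hx₀nat, ?_⟩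
  intro x hx
  have hx₀r : (100:ℝ)*k^2*W^2 ≤ x := by
    refine le_trans (le_of_eq ?_) hx
    push_cast
    ring
  have hk2r : (1:ℝ) ≤ (k:ℝ)^2 := one_le_pow₀ hkr
  have hW2r : (1:ℝ) ≤ (W:ℝ)^2 := one_le_pow₀ hWr
  have hx1 : (1:ℝ) ≤ x := by nlinarith
  set n := ⌊x⌋₊ with hn
  set T := n / (2*W) with hTdef
  have hnx : (n:ℝ) ≤ x := Nat.floor_le (by linarith)
  have hxn : x < n + 1 := Nat.lt_floor_add_one x
  have hnge : 100*k^2*W^2 ≤ n := Nat.le_floor (by push_cast; linarith [hx₀r])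
  have hT : 16*k^2*W ≤ T := by
    rw [hTdef, Nat.le_div_iff_mul_le (by positivity)]
    nlinarith [hnge]
  have hk2n : 1 ≤ k^2 := Nat.one_le_pow _ _ hk
  have hT1 : 1 ≤ T := le_trans (by nlinarith) hT
  have h2TW : 2*T*W ≤ n := by
    calc 2*T*W = T*(2*W) := by ring
      _ ≤ n := Nat.div_mul_le_self n (2*W)
  have hTr : (16:ℝ)*k^2*W ≤ T := by exact_mod_cast hT
  have hreal : x ≤ 8*(W:ℝ)*T := by
    have hmod := Nat.div_add_mod n (2*W)
    have hmlt : n % (2*W) < 2*W := Nat.mod_lt _ (by positivity)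
    have h1 : (n:ℝ) < 2*W*(T+1) := by
      have : n < 2*W*(T+1) := by
        rw [← hTdef] at hmod
        rw [Nat.mul_add, Nat.mul_one]
        omega
      exact_mod_cast this
    have hWT : 16*(k:ℝ)^2*(W:ℝ)*(W:ℝ) ≤ (W:ℝ)*(T:ℝ) := by
      calc 16*(k:ℝ)^2*(W:ℝ)*(W:ℝ) = (W:ℝ)*(16*(k:ℝ)^2*(W:ℝ)) := by ring
        _ ≤ (W:ℝ)*(T:ℝ) := by
          apply mul_le_mul_of_nonneg_left hTr (by linarith)
    nlinarith [hWT, hk2r, hW2r, hWr, hxn, h1, sq_nonneg ((W:ℝ)-1)]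
  have hgc := good_count k W T hk hWdvd hW hT
  set Good := (Fintype.piFinset fun _ : Fin k => Finset.Icc T (2*T-1)).filter
      (fun t => ∀ i j : Fin k, i < j → Nat.Coprime (1 + t i * W) (1 + t j * W)) with hGood
  set F : (Fin k → ℕ) → (Fin k → ℕ) := fun t i => 1 + t i * W with hF
  have hinj : ∀ t ∈ Good, ∀ t' ∈ Good, F t = F t' → t = t' := by
    intro t _ t' _ h
    funext i
    have := congrFun h i
    simp only [hF] at this
    have : t i * W = t' i * W := by omega
    exact Nat.eq_of_mul_eq_mul_right hW this
  have hub : ∀ t ∈ Good, ∀ i, T ≤ t i ∧ 1 + t i * W ≤ n := by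
    intro t ht i
    have htG := (Finset.mem_filter.mp ht).1
    rw [Fintype.mem_piFinset] at htG
    have h1 := Finset.mem_Icc.mp (htG i)
    constructor
    · exact h1.1
    · have h2T : 2*T-1+1 = 2*T := by omega
      have hstep : (2*T-1)*W + W = 2*T*W := by
        calc (2*T-1)*W + W = (2*T-1+1)*W := by rw [Nat.add_mul, one_mul]
          _ = 2*T*W := by rw [h2T]
      have hbb : t i * W ≤ (2*T-1)*W := Nat.mul_le_mul_right _ h1.2
      omega
  have himage : Good.image F ⊆ (Fintype.piFinset fun _ : Fin k => Finset.Icc 1 n).filter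
      (fun q => ∀ i j : Fin k, i < j → Nat.Coprime (q i) (q j)) := by
    intro q hq
    rw [Finset.mem_image] at hq
    obtain ⟨t, ht, rfl⟩ := hq
    rw [Finset.mem_filter]
    constructor
    · rw [Fintype.mem_piFinset]
      intro i
      rw [Finset.mem_Icc]
      exact ⟨by simp [hF], (hub t ht i).2⟩
    · intro i j hij
      exact (Finset.mem_filter.mp ht).2 i j hij
  have hsum1 : (Good.card : ℝ) * ((T:ℝ)*W)^k ≤ ∑ t ∈ Good, ∏ i, ((F t i : ℕ):ℝ) := by
    have : ∀ t ∈ Good, ((T:ℝ)*W)^k ≤ ∏ i, ((F t i : ℕ):ℝ) := by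
      intro t ht
      rw [show ((T:ℝ)*W)^k = ∏ _i : Fin k, ((T:ℝ)*(W:ℝ)) by rw [Finset.prod_const]; simp]
      apply Finset.prod_le_prod
      · intro i _; positivity
      · intro i _
        have h1 := (hub t ht i).1
        have : (T:ℝ) ≤ t i := by exact_mod_cast h1
        have hFv : ((F t i : ℕ):ℝ) = 1 + (t i : ℝ)*W := by rw [hF]; push_cast; ring
        rw [hFv]
        nlinarith
    calc (Good.card : ℝ) * ((T:ℝ)*W)^k = Good.card • (((T:ℝ)*W)^k) := by
          rw [nsmul_eq_mul]
      _ ≤ ∑ t ∈ Good, ∏ i, ((F t i : ℕ):ℝ) := Finset.card_nsmul_le_sum _ _ _ this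
  have hsum2 : ∑ t ∈ Good, ∏ i, ((F t i : ℕ):ℝ) = ∑ q ∈ Good.image F, ∏ i, ((q i : ℕ):ℝ) := by
    rw [Finset.sum_image hinj]
  have hsum3 : ∑ q ∈ Good.image F, ∏ i, ((q i : ℕ):ℝ) ≤
      ∑ q ∈ (Fintype.piFinset fun _ : Fin k => Finset.Icc 1 n).filter
        (fun q => ∀ i j : Fin k, i < j → Nat.Coprime (q i) (q j)), ∏ i, ((q i : ℕ):ℝ) := by
    apply Finset.sum_le_sum_of_subset_of_nonneg himage
    intro q _ _
    positivity
  have hTrpos : (0:ℝ) < T := by exact_mod_cast hT1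
  have hfinal : 1 / (2 * 64^k * (W:ℝ)^k) * x^(2*k) ≤ ((T:ℝ)^k/2) * ((T:ℝ)*W)^k := by
    have hxpow : x^(2*k) ≤ (8*(W:ℝ)*T)^(2*k) := pow_le_pow_left₀ (by linarith) hreal _
    have hkey : 1 / (2 * 64^k * (W:ℝ)^k) * (8*(W:ℝ)*(T:ℝ))^(2*k) = ((T:ℝ)^k/2)*((T:ℝ)*(W:ℝ))^k := by
      rw [pow_mul]
      have : ((8*(W:ℝ)*(T:ℝ))^2) = 64 * ((W:ℝ)^2*(T:ℝ)^2) := by ring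
      rw [this, mul_pow, mul_pow, mul_pow]
      have hWk : (W:ℝ)^k ≠ 0 := by positivity
      field_simp
      ring
    have hc : (0:ℝ) ≤ 1 / (2 * 64^k * (W:ℝ)^k) := by positivity
    calc 1 / (2 * 64^k * (W:ℝ)^k) * x^(2*k) ≤ 1 / (2 * 64^k * (W:ℝ)^k) * (8*(W:ℝ)*T)^(2*k) := by
          exact mul_le_mul_of_nonneg_left hxpow hc
      _ = ((T:ℝ)^k/2)*((T:ℝ)*(W:ℝ))^k := hkey
  have hcardle : ((T:ℝ)^k/2) * ((T:ℝ)*W)^k ≤ (Good.card : ℝ) * ((T:ℝ)*W)^k := by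
    apply mul_le_mul_of_nonneg_right _ (by positivity)
    exact hgc
  calc 1 / (2 * 64^k * (W:ℝ)^k) * x^(2*k) ≤ ((T:ℝ)^k/2) * ((T:ℝ)*W)^k := hfinal
    _ ≤ (Good.card : ℝ) * ((T:ℝ)*W)^k := hcardle
    _ ≤ ∑ t ∈ Good, ∏ i, ((F t i : ℕ):ℝ) := hsum1
    _ = ∑ q ∈ Good.image F, ∏ i, ((q i : ℕ):ℝ) := hsum2
    _ ≤ _ := hsum3
end

section
/- There is a constant c > 0 such that ∑_{q ≤ N} 1/d(q) ≥ c·N/(log 3N) for all positive integers N, where d(q) is the number of divisors of q. -/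
/-!
Cauchy–Schwarz gives `N² ≤ (∑ 1/d(q)) (∑ d(q))`, and the divisor sum is at most
`∑_{k ≤ N} N/k ≤ N (1 + log N) ≤ N log 3N`.
-/

open Finset

lemma Real.one_add_log_le_log_three_mul {x : ℝ} (hx : 0 < x) :
    1 + Real.log x ≤ Real.log (3 * x) := by
  rw [Real.log_mul (by norm_num) hx.ne']
  linarith [Real.log_three_gt_d9]

lemma Nat.sum_Icc_card_divisors_le (N : ℕ) :
    ∑ n ∈ Icc 1 N, (n.divisors.card : ℝ) ≤ N * (1 + Real.log N) :=
  calc ∑ n ∈ Icc 1 N, (n.divisors.card : ℝ)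
      = ∑ k ∈ Icc 1 N, ((N / k : ℕ) : ℝ) := by
        simp_rw [← ArithmeticFunction.sigma_zero_apply]
        rw [show Icc 1 N = Ioc 0 N from Icc_add_one_left_eq_Ioc 0 N, ← Nat.cast_sum,
          ← Nat.cast_sum, ArithmeticFunction.sum_Ioc_sigma0_eq_sum_div]
    _ ≤ ∑ k ∈ Icc 1 N, (N : ℝ) / k := sum_le_sum fun _ _ => Nat.cast_div_le
    _ = N * (harmonic N : ℝ) := by
        simp [harmonic_eq_sum_Icc, mul_sum, div_eq_mul_inv]
    _ ≤ N * (1 + Real.log N) := by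
        gcongr
        exact harmonic_le_one_add_log N

theorem stmt12 :
    ∃ c : ℝ, 0 < c ∧ ∀ N : ℕ, 0 < N →
      c * N / Real.log (3 * N) ≤ ∑ q ∈ Finset.Icc 1 N, (1 : ℝ) / (q.divisors.card : ℝ) := by
  refine ⟨1, one_pos, fun N hN => ?_⟩
  have hN' : (0 : ℝ) < N := by exact_mod_cast hN
  have hdivisors_pos : ∀ q ∈ Icc 1 N, (0 : ℝ) < q.divisors.card := fun q hq => by
    have : q ≠ 0 := by simp at hq; omega
    simpa [Nat.pos_iff_ne_zero] using this
  have hdivisor_sum : ∑ q ∈ Icc 1 N, (q.divisors.card : ℝ) ≤ N * Real.log (3 * N) :=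
    (Nat.sum_Icc_card_divisors_le N).trans <| by
      gcongr
      exact Real.one_add_log_le_log_three_mul hN'
  calc 1 * (N : ℝ) / Real.log (3 * N)
      = (N : ℝ) ^ 2 / (N * Real.log (3 * N)) := by field_simp
    _ ≤ (∑ q ∈ Icc 1 N, (1 : ℝ)) ^ 2 / ∑ q ∈ Icc 1 N, (q.divisors.card : ℝ) := by
        gcongr
        · exact sum_pos hdivisors_pos (nonempty_Icc.2 hN)
        · simp
    _ ≤ ∑ q ∈ Icc 1 N, (1 : ℝ) ^ 2 / q.divisors.card := sq_sum_div_le_sum_sq_div _ _ hdivisors_pos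
    _ = ∑ q ∈ Icc 1 N, (1 : ℝ) / q.divisors.card := by simp
end

section
/- Let k ≥ 1. There is a constant c > 0 such that for all N ≥ 1, the set D_k(N) of least common denominators of sums a₁/q₁ + ⋯ + a_k/q_k with 1 ≤ qᵢ ≤ N satisfies |D_k(N)| ≥ c·N^k/(log 3N)^k. -/
open Finset

/-- The set of least denominators of rationals of the form `a₁/q₁ + ⋯ + a_k/q_k`
with `1 ≤ qᵢ ≤ N`. -/
def denomSet (k N : ℕ) : Set ℕ :=
  {d : ℕ | ∃ a q : Fin k → ℤ, (∀ i, 1 ≤ q i ∧ q i ≤ (N : ℤ)) ∧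
    d = (∑ i, (a i : ℚ) / (q i : ℚ)).den}

/-- The finset of primes up to `N`. -/
def primesUpTo (N : ℕ) : Finset ℕ := (Finset.range (N+1)).filter Nat.Prime


lemma isCoprime_num_den (x : ℚ) : IsCoprime x.num (x.den : ℤ) := by
  rw [Int.isCoprime_iff_gcd_eq_one, Int.gcd]
  simpa using x.reduced

lemma den_add_coprime (x y : ℚ) (h : Nat.Coprime x.den y.den) :
    (x + y).den = x.den * y.den := by
  have hb : (0:ℤ) < (x.den : ℤ) := mod_cast x.pos
  have hd : (0:ℤ) < (y.den : ℤ) := mod_cast y.pos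
  have hxy : x + y = ((x.num * y.den + y.num * x.den : ℤ) : ℚ) / ((x.den * y.den : ℤ) : ℚ) := by
    conv_lhs => rw [← Rat.num_div_den x, ← Rat.num_div_den y]
    have hb' : ((x.den : ℚ)) ≠ 0 := by positivity
    have hd' : ((y.den : ℚ)) ≠ 0 := by positivity
    push_cast
    field_simp
  have hbd : IsCoprime ((x.den : ℤ)) ((y.den : ℤ)) := by
    rw [Int.isCoprime_iff_gcd_eq_one, Int.gcd]
    simpa using h
  have h1 : IsCoprime (x.num * y.den + y.num * x.den) (x.den : ℤ) := by
    have h0 : IsCoprime (x.num * y.den) (x.den : ℤ) :=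
      (isCoprime_num_den x).mul_left hbd.symm
    have := h0.add_mul_left_left y.num
    rwa [mul_comm (x.den : ℤ) y.num] at this
  have h2 : IsCoprime (x.num * y.den + y.num * x.den) (y.den : ℤ) := by
    have h0 : IsCoprime (y.num * x.den) (y.den : ℤ) :=
      (isCoprime_num_den y).mul_left hbd
    have := h0.add_mul_left_left x.num
    rwa [mul_comm (y.den : ℤ) x.num, add_comm] at this
  have hcop : Nat.Coprime (x.num * y.den + y.num * x.den).natAbs
      ((x.den * y.den : ℤ)).natAbs :=
    Int.isCoprime_iff_gcd_eq_one.mp (h1.mul_right h2)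
  have := Rat.den_div_eq_of_coprime (a := x.num * y.den + y.num * x.den)
    (b := (x.den : ℤ) * (y.den : ℤ)) (by positivity) (by exact_mod_cast hcop)
  rw [← hxy] at this
  exact_mod_cast this

lemma den_one_div (n : ℕ) (hn : 0 < n) : ((1 : ℚ) / (n : ℚ)).den = n := by
  rw [one_div]
  exact Rat.inv_natCast_den_of_pos hn

lemma den_sum_one_div_primes (S : Finset ℕ) (hS : ∀ p ∈ S, p.Prime) :
    (∑ p ∈ S, (1 : ℚ) / (p : ℚ)).den = ∏ p ∈ S, p := by
  induction S using Finset.induction_on with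
  | empty => simp
  | @insert p S hp ih =>
    rw [Finset.sum_insert hp, Finset.prod_insert hp]
    have hprime : p.Prime := hS p (mem_insert_self _ _)
    have hrest : (∑ q ∈ S, (1 : ℚ) / (q : ℚ)).den = ∏ q ∈ S, q :=
      ih fun q hq => hS q (mem_insert_of_mem hq)
    have hcop : Nat.Coprime ((1 : ℚ) / (p : ℚ)).den (∑ q ∈ S, (1 : ℚ) / (q : ℚ)).den := by
      rw [den_one_div p hprime.pos, hrest]
      apply Nat.Coprime.prod_right
      intro q hq
      exact (Nat.coprime_primes hprime (hS q (mem_insert_of_mem hq))).mpr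
        (fun h => hp (h ▸ hq))
    rw [den_add_coprime _ _ hcop, den_one_div p hprime.pos, hrest]


lemma prod_mem_denomSet (k N : ℕ) (S : Finset ℕ) (hS : ∀ p ∈ S, p.Prime)
    (hle : ∀ p ∈ S, p ≤ N) (hcard : S.card = k) :
    (∏ p ∈ S, p) ∈ denomSet k N := by
  classical
  let e : {x // x ∈ S} ≃ Fin k := Finset.equivFinOfCardEq hcard
  refine ⟨fun _ => 1, fun i => ((e.symm i : ℕ) : ℤ), fun i => ?_, ?_⟩
  · have hp := hS _ (e.symm i).2
    have h2 : 2 ≤ ((e.symm i : ℕ)) := hp.two_le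
    have hN := hle _ (e.symm i).2
    refine ⟨?_, ?_⟩
    · show (1:ℤ) ≤ ((e.symm i : ℕ) : ℤ)
      exact_mod_cast h2.trans' one_le_two
    · show (((e.symm i : ℕ) : ℤ)) ≤ (N : ℤ)
      exact_mod_cast hN
  · have h1 : (∑ i : Fin k, ((1:ℤ) : ℚ) / (((e.symm i : ℕ) : ℤ) : ℚ))
        = ∑ p ∈ S, (1 : ℚ) / (p : ℚ) := by
      push_cast
      rw [Equiv.sum_comp e.symm (fun x : {x // x ∈ S} => (1:ℚ) / ((x : ℕ) : ℚ)),
        ← Finset.sum_attach S (fun p => (1:ℚ) / (p : ℚ))]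
      rfl
    show ∏ p ∈ S, p = (∑ i : Fin k, ((1:ℤ) : ℚ) / (((e.symm i : ℕ) : ℤ) : ℚ)).den
    rw [h1, den_sum_one_div_primes S hS]

lemma den_sum_dvd {ι : Type*} (s : Finset ι) (f : ι → ℚ) :
    (∑ i ∈ s, f i).den ∣ ∏ i ∈ s, (f i).den := by
  classical
  induction s using Finset.induction_on with
  | empty => simp
  | @insert a s ha ih =>
    rw [Finset.sum_insert ha, Finset.prod_insert ha]
    exact (Rat.add_den_dvd _ _).trans (mul_dvd_mul_left _ ih)

lemma den_div_int_dvd (a b : ℤ) : (((a : ℚ) / (b : ℚ)).den : ℤ) ∣ b := by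
  rw [← Rat.divInt_eq_div]
  exact Rat.den_dvd a b

lemma denomSet_subset (k N : ℕ) : denomSet k N ⊆ Set.Iic (N ^ k) := by
  rintro d ⟨a, q, hq, rfl⟩
  have hdvd := den_sum_dvd (Finset.univ : Finset (Fin k)) (fun i => (a i : ℚ) / (q i : ℚ))
  have hle : ∀ i : Fin k, ((a i : ℚ) / (q i : ℚ)).den ≤ N := by
    intro i
    have h1 := den_div_int_dvd (a i) (q i)
    have h2 : (((a i : ℚ) / (q i : ℚ)).den : ℤ) ≤ q i :=
      Int.le_of_dvd (lt_of_lt_of_le one_pos (hq i).1) h1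
    have := (hq i).2
    exact_mod_cast h2.trans this
  calc (∑ i, (a i : ℚ) / (q i : ℚ)).den ≤ ∏ i : Fin k, ((a i : ℚ) / (q i : ℚ)).den :=
        Nat.le_of_dvd (Finset.prod_pos fun i _ => (Rat.den_pos _)) hdvd
    _ ≤ ∏ _i : Fin k, N := Finset.prod_le_prod' fun i _ => hle i
    _ = N ^ k := by simp

lemma denomSet_finite (k N : ℕ) : (denomSet k N).Finite :=
  (Set.finite_Iic _).subset (denomSet_subset k N)

lemma one_mem_denomSet (k N : ℕ) (hN : 1 ≤ N) : 1 ∈ denomSet k N :=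
  ⟨fun _ => 0, fun _ => 1, fun _ => ⟨le_refl _, by
    show (1:ℤ) ≤ (N:ℤ); exact_mod_cast hN⟩, by norm_num⟩


/-- primes up to N -/
lemma centralBinom_le_pow (m : ℕ) (hm : 0 < m) :
    Nat.centralBinom m ≤ (2*m) ^ (primesUpTo (2*m)).card := by
  have hne : Nat.centralBinom m ≠ 0 := (Nat.centralBinom_pos m).ne'
  have hsub : (Nat.centralBinom m).primeFactors ⊆ primesUpTo (2*m) := by
    intro p hp
    have hpp : p.Prime := Nat.prime_of_mem_primeFactors hp
    have h1 : (Nat.centralBinom m).factorization p ≠ 0 := by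
      rwa [← Nat.support_factorization, Finsupp.mem_support_iff] at hp
    have hple : p ≤ 2*m := by
      have h2 : p ^ ((2*m).choose m).factorization p ≤ 2*m :=
        Nat.pow_factorization_choose_le (by omega)
      calc p = p ^ 1 := (pow_one p).symm
        _ ≤ p ^ ((Nat.centralBinom m).factorization p) :=
            Nat.pow_le_pow_right hpp.pos (by omega)
        _ ≤ 2*m := h2
    simp only [primesUpTo, Finset.mem_filter, Finset.mem_range]
    exact ⟨by omega, hpp⟩
  calc Nat.centralBinom m
      = ∏ p ∈ (Nat.centralBinom m).primeFactors, p ^ ((Nat.centralBinom m).factorization p) := by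
        rw [← Nat.support_factorization]
        exact (Nat.factorization_prod_pow_eq_self hne).symm
    _ = ∏ p ∈ primesUpTo (2*m), p ^ ((Nat.centralBinom m).factorization p) := by
        refine Finset.prod_subset hsub fun p _ hp => ?_
        rw [← Nat.support_factorization, Finsupp.mem_support_iff, not_not] at hp
        rw [hp, pow_zero]
    _ ≤ (2*m) ^ (primesUpTo (2*m)).card := by
        refine Finset.prod_le_pow_card _ _ _ fun p _ => ?_
        exact Nat.pow_factorization_choose_le (by omega)
  
lemma four_pow_le (m : ℕ) (hm : 0 < m) :
    4 ^ m ≤ (2*m) ^ ((primesUpTo (2*m)).card + 1) := by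
  calc 4 ^ m ≤ 2 * m * Nat.centralBinom m :=
        Nat.four_pow_le_two_mul_self_mul_centralBinom m hm
    _ ≤ 2 * m * (2*m) ^ (primesUpTo (2*m)).card :=
        Nat.mul_le_mul_left _ (centralBinom_le_pow m hm)
    _ = (2*m) ^ ((primesUpTo (2*m)).card + 1) := by ring

lemma primesUpTo_mono : Monotone fun N => primesUpTo N := fun a b hab => by
  apply Finset.filter_subset_filter
  exact Finset.range_subset_range.mpr (by omega)

lemma cheb_real (N : ℕ) (hN : 2 ≤ N) :
    ((N : ℝ) - 1) * Real.log 2 ≤ ((primesUpTo N).card + 1) * Real.log (3*N) := by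
  set m := N / 2 with hm
  have hm1 : 1 ≤ m := by omega
  have h2m : 2*m ≤ N := by omega
  have h2m' : N ≤ 2*m + 1 := by omega
  have hnat : 4 ^ m ≤ (2*m) ^ ((primesUpTo N).card + 1) := by
    refine (four_pow_le m hm1).trans (Nat.pow_le_pow_right (by omega) ?_)
    have h := Finset.card_le_card (primesUpTo_mono h2m)
    simp only at h
    omega
  have hreal : ((4:ℝ)) ^ m ≤ ((2*m : ℕ) : ℝ) ^ ((primesUpTo N).card + 1) := by
    exact_mod_cast hnat
  have hlog := Real.log_le_log (by positivity) hreal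
  rw [Real.log_pow, Real.log_pow] at hlog
  have h4 : Real.log 4 = 2 * Real.log 2 := by
    rw [show (4:ℝ) = 2^2 by norm_num, Real.log_pow]; push_cast; ring
  have hle2 : Real.log ((2*m : ℕ) : ℝ) ≤ Real.log (3*N) := by
    have h0 : (0:ℝ) < ((2*m : ℕ) : ℝ) := by
      have : 0 < 2*m := by omega
      exact_mod_cast this
    refine Real.log_le_log h0 ?_
    have h1 : ((2*m : ℕ) : ℝ) ≤ (N : ℝ) := by exact_mod_cast h2m
    have h2 : (0:ℝ) ≤ (N:ℝ) := by positivity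
    linarith
  have hm' : ((N : ℝ) - 1) / 2 ≤ (m : ℕ) := by
    have : (N:ℝ) ≤ 2*m+1 := by exact_mod_cast h2m'
    linarith
  have hlog2 : (0:ℝ) ≤ Real.log 2 := Real.log_nonneg (by norm_num)
  have hcard : (0:ℝ) ≤ ((primesUpTo N).card + 1 : ℕ) := by positivity
  calc ((N : ℝ) - 1) * Real.log 2 = (((N:ℝ)-1)/2) * Real.log 4 := by rw [h4]; ring
    _ ≤ (m : ℝ) * Real.log 4 := by
        apply mul_le_mul_of_nonneg_right hm'
        rw [h4]; linarith
    _ ≤ (((primesUpTo N).card + 1 : ℕ) : ℝ) * Real.log ((2*m:ℕ):ℝ) := hlog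
    _ ≤ ((primesUpTo N).card + 1) * Real.log (3*N) := by
        push_cast
        push_cast at hle2
        apply mul_le_mul_of_nonneg_left hle2 (by positivity)


lemma log_le_two_sqrt (x : ℝ) (hx : 1 ≤ x) : Real.log x ≤ 2 * Real.sqrt x := by
  have h0 : 0 < x := by linarith
  have hs : 0 < Real.sqrt x := Real.sqrt_pos.mpr h0
  have h1 : Real.log (Real.sqrt x) = Real.log x / 2 := Real.log_sqrt h0.le
  have h2 := Real.log_le_sub_one_of_pos hs
  rw [h1] at h2
  linarith

lemma log2_half : (1:ℝ)/2 ≤ Real.log 2 := by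
  have := Real.log_two_gt_d9
  linarith

lemma log2_le_one : Real.log 2 ≤ 1 := by
  have := Real.log_two_lt_d9
  linarith

lemma cheb_count (k N : ℕ) (hN1 : 97 ≤ N) (hN2 : 4096*(k+1)^2 ≤ N) :
    (Real.log 2 / 4) * N / Real.log (3*N) ≤ (primesUpTo N).card ∧
      2*k ≤ (primesUpTo N).card := by
  have hN : 2 ≤ N := by omega
  have hNR : (97:ℝ) ≤ N := by exact_mod_cast hN1
  set t := Real.sqrt (3*N) with ht
  have ht2 : t^2 = 3*N := Real.sq_sqrt (by positivity)
  have ht17 : 17 ≤ t := by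
    nlinarith [Real.sqrt_nonneg (3*(N:ℝ)), ht2]
  have hL : Real.log (3*N) ≤ 2*t := log_le_two_sqrt _ (by linarith)
  have hLpos : 0 < Real.log (3*N) := Real.log_pos (by linarith)
  have hch := cheb_real N hN
  set C := ((primesUpTo N).card : ℝ) with hC
  have hC0 : 0 ≤ C := by positivity
  have hl2 := log2_half
  have hl2' := log2_le_one
  constructor
  · rw [div_le_iff₀ hLpos]
    -- (log2/4) * N ≤ C * log(3N); use C*L ≥ (N-1)log2 - L and L ≤ (3N/4-1)log2
    have key : Real.log (3*N) ≤ ((3*N:ℝ)/4 - 1) * Real.log 2 := by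
      nlinarith
    nlinarith
  · have hNk : (4096:ℝ)*(k+1)^2 ≤ N := by exact_mod_cast hN2
    have htk : 110*((k:ℝ)+1) ≤ t := by
      nlinarith [Real.sqrt_nonneg (3*(N:ℝ))]
    have h : (2*k : ℝ) ≤ C := by nlinarith
    rw [hC] at h
    exact_mod_cast h


lemma choose_le_ncard (k N : ℕ) :
    Nat.choose (primesUpTo N).card k ≤ (denomSet k N).ncard := by
  classical
  set T := (primesUpTo N).powersetCard k with hT
  have hprimes : ∀ S ∈ T, ∀ p ∈ S, p.Prime := by
    intro S hS p hp
    have h1 := (Finset.mem_powersetCard.mp hS).1 hp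
    exact (Finset.mem_filter.mp h1).2
  have hle : ∀ S ∈ T, ∀ p ∈ S, p ≤ N := by
    intro S hS p hp
    have h1 := (Finset.mem_powersetCard.mp hS).1 hp
    have := (Finset.mem_filter.mp h1).1
    rw [Finset.mem_range] at this
    omega
  set F := T.image fun S => ∏ p ∈ S, p with hF
  have hinj : Set.InjOn (fun S => ∏ p ∈ S, p) (T : Set (Finset ℕ)) := by
    intro S1 h1 S2 h2 h
    rw [Finset.mem_coe] at h1 h2
    have e1 := Nat.primeFactors_prod (hprimes S1 h1)
    have e2 := Nat.primeFactors_prod (hprimes S2 h2)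
    simp only at h
    rw [← e1, ← e2, h]
  have hcardF : F.card = Nat.choose (primesUpTo N).card k := by
    rw [hF, Finset.card_image_of_injOn hinj, hT, Finset.card_powersetCard]
  have hsub : (F : Set ℕ) ⊆ denomSet k N := by
    intro d hd
    rw [Finset.coe_image] at hd
    obtain ⟨S, hS, rfl⟩ := hd
    rw [Finset.mem_coe] at hS
    exact prod_mem_denomSet k N S (hprimes S hS) (hle S hS)
      (Finset.mem_powersetCard.mp hS).2
  calc Nat.choose (primesUpTo N).card k = F.card := hcardF.symm
    _ = (F : Set ℕ).ncard := (Set.ncard_coe_finset F).symm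
    _ ≤ (denomSet k N).ncard := Set.ncard_le_ncard hsub (denomSet_finite k N)


lemma one_le_log_threeN (N : ℕ) (hN : 1 ≤ N) : 1 ≤ Real.log (3*N) := by
  have h3 : (3:ℝ) ≤ 3*N := by
    have : (1:ℝ) ≤ N := by exact_mod_cast hN
    linarith
  have he : Real.exp 1 ≤ 3*N := by
    have := Real.exp_one_lt_d9
    linarith
  rwa [Real.le_log_iff_exp_le (by linarith [Real.exp_pos 1])]

theorem stmt15 (k : ℕ) (hk : 1 ≤ k) :
    ∃ c : ℝ, 0 < c ∧ ∀ N : ℕ, 1 ≤ N →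
      c * (N : ℝ) ^ k / (Real.log (3 * N)) ^ k ≤ (denomSet k N).ncard := by
  set N₀ : ℕ := max 97 (4096*(k+1)^2) with hN₀
  have hl2 : (0:ℝ) < Real.log 2 := Real.log_pos (by norm_num)
  set c₀ : ℝ := (Real.log 2 / 8)^k / (Nat.factorial k) with hc₀
  have hc₀pos : 0 < c₀ := by
    apply div_pos (pow_pos (by linarith) k)
    exact_mod_cast Nat.factorial_pos k
  refine ⟨min c₀ (1 / (N₀:ℝ)^k), lt_min hc₀pos (by positivity), fun N hN => ?_⟩
  set c := min c₀ (1 / (N₀:ℝ)^k) with hc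
  have hlog1 : 1 ≤ Real.log (3*N) := one_le_log_threeN N hN
  have hlogpos : (0:ℝ) < Real.log (3*N) := by linarith
  have hNpos : (0:ℝ) < N := by exact_mod_cast hN
  by_cases hbig : N₀ ≤ N
  · -- large N
    obtain ⟨h1, h2⟩ := cheb_count k N (le_trans (le_max_left _ _) hbig)
      (le_trans (le_max_right _ _) hbig)
    set m := (primesUpTo N).card with hm
    have hkm : k ≤ m := by omega
    have hchoose : ((m + 1 - k : ℕ) ^ k : ℝ) / (Nat.factorial k) ≤ m.choose k :=
      Nat.pow_le_choose k m
    have hhalf : (m:ℝ)/2 ≤ ((m + 1 - k : ℕ) : ℝ) := by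
      have : ((m + 1 - k : ℕ) : ℝ) = (m:ℝ) + 1 - k := by
        push_cast [Nat.cast_sub (by omega : k ≤ m + 1)]
        ring
      rw [this]
      have : (k:ℝ) ≤ m/2 := by
        have : (2*k : ℕ) ≤ m := h2
        have : ((2*k : ℕ) : ℝ) ≤ m := by exact_mod_cast this
        push_cast at this
        linarith
      linarith
    have hx : (0:ℝ) ≤ Real.log 2 / 8 * N / Real.log (3*N) := by positivity
    have hxm : Real.log 2 / 8 * N / Real.log (3*N) ≤ (m:ℝ)/2 := by
      have := h1
      rw [div_le_iff₀ hlogpos] at this ⊢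
      linarith
    have key : c₀ * (N:ℝ)^k / (Real.log (3*N))^k ≤ ((m.choose k : ℕ) : ℝ) := by
      calc c₀ * (N:ℝ)^k / (Real.log (3*N))^k
          = (Real.log 2 / 8 * N / Real.log (3*N))^k / (Nat.factorial k) := by
            rw [hc₀]
            simp only [div_pow, mul_pow]
            ring
        _ ≤ ((m:ℝ)/2)^k / (Nat.factorial k) := by
            gcongr
        _ ≤ ((m + 1 - k : ℕ) ^ k : ℝ) / (Nat.factorial k) := by
            push_cast
            gcongr
        _ ≤ ((m.choose k : ℕ) : ℝ) := hchoose
    have hfin : (m.choose k : ℝ) ≤ ((denomSet k N).ncard : ℝ) := by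
      exact_mod_cast choose_le_ncard k N
    calc c * (N:ℝ)^k / (Real.log (3*N))^k
        ≤ c₀ * (N:ℝ)^k / (Real.log (3*N))^k := by
          gcongr
          exact min_le_left _ _
      _ ≤ ((denomSet k N).ncard : ℝ) := key.trans hfin
  · -- small N
    push_neg at hbig
    have hcard : 1 ≤ (denomSet k N).ncard := by
      have := (Set.ncard_pos (denomSet_finite k N)).mpr ⟨1, one_mem_denomSet k N hN⟩
      omega
    have hNle : (N:ℝ) ≤ N₀ := by exact_mod_cast hbig.le
    have hN₀pos : (0:ℝ) < (N₀:ℝ) := by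
      have : 0 < N₀ := lt_of_lt_of_le (by norm_num) (le_max_left 97 _)
      exact_mod_cast this
    have h1 : c * (N:ℝ)^k ≤ 1 := by
      calc c * (N:ℝ)^k ≤ (1/(N₀:ℝ)^k) * (N₀:ℝ)^k := by
            apply mul_le_mul (min_le_right _ _) (pow_le_pow_left₀ hNpos.le hNle k)
              (by positivity) (by positivity)
        _ = 1 := by field_simp
    have hlogk : (1:ℝ) ≤ (Real.log (3*N))^k := one_le_pow₀ hlog1
    have hcpos : (0:ℝ) < c := lt_min hc₀pos (by positivity)
    calc c * (N:ℝ)^k / (Real.log (3*N))^k ≤ c * (N:ℝ)^k / 1 := by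
          gcongr
      _ = c * (N:ℝ)^k := by ring
      _ ≤ 1 := h1
      _ ≤ ((denomSet k N).ncard : ℝ) := by exact_mod_cast hcard
end

section
/- For every positive integer k there is no constant C such that for all N and all real θ ∈ [0,1] there exist integers a₁,…,a_k, q₁,…,q_k with 1 ≤ qᵢ ≤ N satisfying |a₁/q₁ + ⋯ + a_k/q_k − θ| ≤ C/(q₁⋯q_k·N^k), assuming the Erdős bound |D_k(N)| ≪ N^k(log N)^{−c} for some c = c(k) > 0. -/
open Finset

lemma sum_eq_div (k : ℕ) (a q : Fin k → ℤ) (hq : ∀ i, 1 ≤ q i) :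
    (∑ i, (a i : ℚ) / (q i : ℚ)) =
      ((∑ i, a i * ∏ j ∈ univ.erase i, q j : ℤ) : ℚ) / ((∏ i, q i : ℤ) : ℚ) := by
  push_cast
  rw [Finset.sum_div]
  refine Finset.sum_congr rfl fun i _ => ?_
  have hP : (∏ j ∈ univ.erase i, (q j : ℚ)) ≠ 0 := by
    refine Finset.prod_ne_zero_iff.mpr fun j _ => ?_
    have := hq j; positivity
  rw [← Finset.mul_prod_erase univ (fun j => (q j : ℚ)) (mem_univ i)]
  rw [mul_comm ((q i : ℚ)) _, ← div_div, mul_div_assoc, div_self hP, mul_one]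

lemma den_le (k : ℕ) (a q : Fin k → ℤ) (hq : ∀ i, 1 ≤ q i) :
    ((∑ i, (a i : ℚ) / (q i : ℚ)).den : ℤ) ≤ ∏ i, q i := by
  have hP : (0 : ℤ) < ∏ i, q i := Finset.prod_pos fun i _ => lt_of_lt_of_le one_pos (hq i)
  rw [sum_eq_div k a q hq, ← Rat.divInt_eq_div]
  exact Int.le_of_dvd hP (Rat.den_dvd _ _)

lemma prod_le_pow (k N : ℕ) (q : Fin k → ℤ) (hq : ∀ i, 1 ≤ q i ∧ q i ≤ (N : ℤ)) :
    ∏ i, q i ≤ (N : ℤ) ^ k := by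
  calc ∏ i, q i ≤ ∏ _i : Fin k, (N : ℤ) :=
        Finset.prod_le_prod (fun i _ => by linarith [(hq i).1]) (fun i _ => (hq i).2)
    _ = (N : ℤ) ^ k := by simp

lemma den_le_pow (k N : ℕ) (a q : Fin k → ℤ) (hq : ∀ i, 1 ≤ q i ∧ q i ≤ (N : ℤ)) :
    (∑ i, (a i : ℚ) / (q i : ℚ)).den ≤ N ^ k := by
  have h := (den_le k a q fun i => (hq i).1).trans (prod_le_pow k N q hq)
  exact_mod_cast h

set_option maxHeartbeats 1000000 in
theorem stmt17 (k : ℕ) (hk : 0 < k)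
    (erdos : ∃ c C' : ℝ, 0 < c ∧ 0 < C' ∧ ∀ N : ℕ, 2 ≤ N →
      ((denomSet k N).ncard : ℝ) ≤ C' * (N : ℝ) ^ k * (Real.log N) ^ (-c)) :
    ¬ ∃ C : ℝ, 0 < C ∧ ∀ N : ℕ, 0 < N → ∀ θ ∈ Set.Icc (0 : ℝ) 1,
      ∃ a q : Fin k → ℤ, (∀ i, 1 ≤ q i ∧ q i ≤ (N : ℤ)) ∧
        |(∑ i, (a i : ℝ) / (q i : ℝ)) - θ| ≤ C / ((∏ i, (q i : ℝ)) * (N : ℝ) ^ k) := by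
  classical
  obtain ⟨c, C', hc, hC', herdos⟩ := erdos
  rintro ⟨C, hC, hap⟩
  set m : ℕ := ⌈C⌉₊ with hm
  have hCm : C ≤ (m : ℝ) := Nat.le_ceil C
  set K : ℝ := ((2 * m + 4 : ℕ) : ℝ) * (2 * C) * C' with hK
  -- choose a large N
  have hlim : Filter.Tendsto (fun N : ℕ => K * (Real.log N) ^ (-c)) Filter.atTop (nhds 0) := by
    have h1 := (tendsto_rpow_neg_atTop hc).comp
      (Real.tendsto_log_atTop.comp tendsto_natCast_atTop_atTop)
    simpa using h1.const_mul K
  have hev : ∀ᶠ N : ℕ in Filter.atTop, K * (Real.log N) ^ (-c) < 1 :=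
    hlim.eventually_lt_const one_pos
  obtain ⟨N, hNlt, hN2⟩ := (hev.and (Filter.eventually_ge_atTop 2)).exists
  -- setup
  have hNk : (0 : ℝ) < (N : ℝ) ^ k := by positivity
  set D : Finset ℕ := (Finset.Icc 1 (N ^ k)).filter (· ∈ denomSet k N) with hD
  set A : ℕ → Finset ℤ := fun d => Finset.Icc (-(((m : ℤ) + 1) * d)) (((m : ℤ) + 2) * d) with hA
  set I : ℕ → ℤ → Set ℝ := fun d a =>
    Set.Icc ((a : ℝ) / d - C / (d * (N : ℝ) ^ k)) ((a : ℝ) / d + C / (d * (N : ℝ) ^ k)) with hI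
  -- cover claim
  have hcover : Set.Icc (0 : ℝ) 1 ⊆ ⋃ d ∈ D, ⋃ a ∈ A d, I d a := by
    intro θ hθ
    obtain ⟨a, q, hq, happ⟩ := hap N (by omega) θ hθ
    set s : ℚ := ∑ i, (a i : ℚ) / (q i : ℚ) with hs
    have hq1 : ∀ i, 1 ≤ q i := fun i => (hq i).1
    have hd1 : 1 ≤ s.den := s.pos
    have hdR : (1 : ℝ) ≤ (s.den : ℝ) := by exact_mod_cast hd1
    have hdR0 : (0 : ℝ) < (s.den : ℝ) := by linarith
    have hdle : ((s.den : ℝ)) ≤ ((∏ i, q i : ℤ) : ℝ) := by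
      have h := den_le k a q hq1
      rw [← hs] at h
      exact_mod_cast h
    have hprodR : (∏ i, (q i : ℝ)) = ((∏ i, q i : ℤ) : ℝ) := by push_cast; rfl
    have hsR : ((s : ℝ)) = ∑ i, (a i : ℝ) / (q i : ℝ) := by rw [hs]; push_cast; rfl
    set r : ℝ := C / (s.den * (N : ℝ) ^ k) with hr
    have hr0 : 0 < r := by positivity
    have happ2 : |(s : ℝ) - θ| ≤ r := by
      rw [hsR]
      refine happ.trans ?_
      rw [hr, hprodR]
      gcongr
    have hNk1 : (1 : ℝ) ≤ (N : ℝ) ^ k := by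
      apply one_le_pow₀
      have : (2 : ℝ) ≤ (N : ℝ) := by exact_mod_cast hN2
      linarith
    have hrC : r ≤ C := by
      rw [hr]
      apply div_le_self hC.le
      nlinarith
    have hcast : ((s : ℝ)) = (s.num : ℝ) / (s.den : ℝ) := by
      rw [Rat.cast_def]
    have habs : |(s.num : ℝ) / (s.den : ℝ) - θ| ≤ r := by rw [← hcast]; exact happ2
    have hx := abs_le.mp habs
    have hθ0 : (0 : ℝ) ≤ θ := hθ.1
    have hθ1 : θ ≤ 1 := hθ.2
    have hxlow : -C * (s.den : ℝ) ≤ (s.num : ℝ) := by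
      have h1 : -C ≤ (s.num : ℝ) / (s.den : ℝ) := by linarith [hx.1]
      calc -C * (s.den : ℝ) ≤ ((s.num : ℝ) / (s.den : ℝ)) * (s.den : ℝ) := by
            apply mul_le_mul_of_nonneg_right h1 (by linarith)
        _ = (s.num : ℝ) := by field_simp
    have hxhigh : (s.num : ℝ) ≤ (1 + C) * (s.den : ℝ) := by
      have h1 : (s.num : ℝ) / (s.den : ℝ) ≤ 1 + C := by linarith [hx.2]
      calc (s.num : ℝ) = ((s.num : ℝ) / (s.den : ℝ)) * (s.den : ℝ) := by field_simp
        _ ≤ (1 + C) * (s.den : ℝ) := by apply mul_le_mul_of_nonneg_right h1 (by linarith)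
    have hdmem : s.den ∈ D := by
      rw [hD, Finset.mem_filter, Finset.mem_Icc]
      refine ⟨⟨hd1, ?_⟩, ⟨a, q, hq, hs ▸ rfl⟩⟩
      have := den_le_pow k N a q hq
      rw [← hs] at this
      exact this
    have hamem : s.num ∈ A s.den := by
      rw [hA, Finset.mem_Icc]
      constructor
      · have : (-(((m : ℤ) + 1) * s.den) : ℝ) ≤ (s.num : ℝ) := by
          push_cast
          nlinarith
        exact_mod_cast this
      · have : (s.num : ℝ) ≤ ((((m : ℤ) + 2) * s.den : ℤ) : ℝ) := by
          push_cast
          nlinarith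
        exact_mod_cast this
    refine Set.mem_iUnion₂.mpr ⟨s.den, hdmem, Set.mem_iUnion₂.mpr ⟨s.num, hamem, ?_⟩⟩
    rw [hI]
    simp only [Set.mem_Icc]
    constructor <;> [linarith [hx.1]; linarith [hx.2]]
  -- measure bound
  have hmeas : (1 : ENNReal) ≤ ∑ d ∈ D, ∑ a ∈ A d, MeasureTheory.volume (I d a) := by
    calc (1 : ENNReal) = MeasureTheory.volume (Set.Icc (0 : ℝ) 1) := by
          simp [Real.volume_Icc]
      _ ≤ MeasureTheory.volume (⋃ d ∈ D, ⋃ a ∈ A d, I d a) :=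
          MeasureTheory.measure_mono hcover
      _ ≤ ∑ d ∈ D, MeasureTheory.volume (⋃ a ∈ A d, I d a) :=
          MeasureTheory.measure_biUnion_finset_le D _
      _ ≤ ∑ d ∈ D, ∑ a ∈ A d, MeasureTheory.volume (I d a) :=
          Finset.sum_le_sum fun d _ => MeasureTheory.measure_biUnion_finset_le (A d) _
  set S : ℝ := ∑ d ∈ D, ∑ a ∈ A d, 2 * C / (d * (N : ℝ) ^ k) with hS
  have hterm : ∀ d ∈ D, ∀ a ∈ A d,
      MeasureTheory.volume (I d a) = ENNReal.ofReal (2 * C / (d * (N : ℝ) ^ k)) := by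
    intro d hd a ha
    rw [hI]
    rw [Real.volume_Icc]
    congr 1
    ring
  have h1S : (1 : ℝ) ≤ S := by
    rw [← ENNReal.one_le_ofReal]
    refine hmeas.trans_eq ?_
    rw [hS, ENNReal.ofReal_sum_of_nonneg (fun d _ => by positivity)]
    refine Finset.sum_congr rfl fun d hd => ?_
    rw [ENNReal.ofReal_sum_of_nonneg (fun a _ => by positivity)]
    exact Finset.sum_congr rfl fun a ha => (hterm d hd a ha)
  -- bound S
  have hcard : ∀ d ∈ D, ((A d).card : ℝ) ≤ ((2 * m + 4 : ℕ) : ℝ) * d := by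
    intro d hd
    have hd1 : 1 ≤ d := by
      rw [hD, Finset.mem_filter, Finset.mem_Icc] at hd
      exact hd.1.1
    have hcardeq : (A d).card = (2 * m + 3) * d + 1 := by
      rw [hA]
      rw [Int.card_Icc]
      have : (((m : ℤ) + 2) * d + 1 - -(((m : ℤ) + 1) * d)) = (((2 * m + 3) * d + 1 : ℕ) : ℤ) := by
        push_cast; ring
      rw [this, Int.toNat_natCast]
    have : (A d).card ≤ (2 * m + 4) * d := by rw [hcardeq]; nlinarith
    exact_mod_cast this
  have hSle : S ≤ K * (Real.log N) ^ (-c) := by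
    have hstep : ∀ d ∈ D, ∑ a ∈ A d, 2 * C / (d * (N : ℝ) ^ k)
        ≤ ((2 * m + 4 : ℕ) : ℝ) * (2 * C) / (N : ℝ) ^ k := by
      intro d hd
      have hd1 : 1 ≤ d := by
        rw [hD, Finset.mem_filter, Finset.mem_Icc] at hd
        exact hd.1.1
      have hdR : (1 : ℝ) ≤ (d : ℝ) := by exact_mod_cast hd1
      rw [Finset.sum_const, nsmul_eq_mul]
      calc ((A d).card : ℝ) * (2 * C / (d * (N : ℝ) ^ k))
          ≤ (((2 * m + 4 : ℕ) : ℝ) * d) * (2 * C / (d * (N : ℝ) ^ k)) := by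
            apply mul_le_mul_of_nonneg_right (hcard d hd) (by positivity)
        _ = ((2 * m + 4 : ℕ) : ℝ) * (2 * C) / (N : ℝ) ^ k := by
            field_simp
    have hDcard : (D.card : ℝ) ≤ C' * (N : ℝ) ^ k * (Real.log N) ^ (-c) := by
      refine le_trans ?_ (herdos N hN2)
      have hsub : (D : Set ℕ) ⊆ denomSet k N := by
        intro d hd
        simp only [hD, Finset.coe_filter, Set.mem_setOf_eq] at hd
        exact hd.2
      have hfin : (denomSet k N).Finite := by
        refine (Set.finite_Icc 1 (N ^ k)).subset ?_
        rintro d ⟨a, q, hq, rfl⟩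
        exact ⟨(∑ i, (a i : ℚ) / (q i : ℚ)).pos, den_le_pow k N a q hq⟩
      have := Set.ncard_le_ncard hsub hfin
      rw [Set.ncard_coe_finset] at this
      exact_mod_cast this
    calc S ≤ ∑ _d ∈ D, ((2 * m + 4 : ℕ) : ℝ) * (2 * C) / (N : ℝ) ^ k :=
          Finset.sum_le_sum hstep
      _ = (D.card : ℝ) * (((2 * m + 4 : ℕ) : ℝ) * (2 * C) / (N : ℝ) ^ k) := by
          rw [Finset.sum_const, nsmul_eq_mul]
      _ ≤ (C' * (N : ℝ) ^ k * (Real.log N) ^ (-c)) *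
            (((2 * m + 4 : ℕ) : ℝ) * (2 * C) / (N : ℝ) ^ k) := by
          apply mul_le_mul_of_nonneg_right hDcard (by positivity)
      _ = K * (Real.log N) ^ (-c) := by
          rw [hK]
          field_simp
  linarith
end
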